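/- arXiv:2004.07520 — 2 statements merged into one kernel-verified Lean document; each statement's English description precedes it below -/
import Mathlib

section
/- Let X ⊂ ℤ^d be finite, and let 𝒜' ∈ 𝐌^B_X and 𝒟 ∈ 𝐌^B_X (B ⊂ X) agree on the set ⋃_j (Ω_j × Ω̃_j), where B = ⋃_j Ω_j is a partition of B, Ω̃_j ⊃ Ω_j, and 𝒟 vanishes off ⋃_j (Ω_j × Ω̃_j). Suppose 𝒟 has a left inverse 𝒲 (i.e. 𝒲𝒟 = I on ℂ^B). Then the matrix 𝒲₀ defined by 𝒲₀(k,k') = 𝒲(k,k') for (k,k') ∈ ⋃_j (Ω_j × Ω̃_j) and 𝒲₀(k,k') = 0 otherwise is also a left inverse of 𝒟, provided the sets Ω̃_j (j distinct) are pairwise disjoint. -/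
open scoped BigOperators
open Classical

/-- Truncation of a left inverse (Berti–Bolle): if `D` is supported on
`⋃_j (Ω̃_j × Ω_j)` with `Ω_j` pairwise disjoint covering `B`, `Ω_j ⊆ Ω̃_j`, and the `Ω̃_j`
pairwise disjoint, and `W` is a left inverse of `D`, then the truncation `W₀` of `W` to
`⋃_j (Ω_j × Ω̃_j)` is also a left inverse of `D`. -/
theorem stmt_15 (d : ℕ) (X B : Finset (Fin d → ℤ)) (hBX : B ⊆ X)
    (J : Type*) (Ω Ω' : J → Finset (Fin d → ℤ))
    (hΩB : ∀ j, Ω j ⊆ B) (hcover : ∀ b ∈ B, ∃ j, b ∈ Ω j)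
    (hΩdisj : ∀ j j', j ≠ j' → Disjoint (Ω j) (Ω j'))
    (hsub : ∀ j, Ω j ⊆ Ω' j) (hΩ'X : ∀ j, Ω' j ⊆ X)
    (hΩ'disj : ∀ j j', j ≠ j' → Disjoint (Ω' j) (Ω' j'))
    (D : Matrix X B ℂ)
    (hDsupp : ∀ (x : X) (b : B), D x b ≠ 0 → ∃ j, (b : Fin d → ℤ) ∈ Ω j ∧ (x : Fin d → ℤ) ∈ Ω' j)
    (W : Matrix B X ℂ) (hWD : W * D = 1) :
    (Matrix.of fun (b : B) (x : X) =>
      if ∃ j, (b : Fin d → ℤ) ∈ Ω j ∧ (x : Fin d → ℤ) ∈ Ω' j then W b x else 0) * D = 1 := by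
  ext b b'
  obtain ⟨jb, hjb⟩ := hcover b b.2
  by_cases hb' : (b' : Fin d → ℤ) ∈ Ω jb
  · have : ∀ x : X,
        (if ∃ j, (b : Fin d → ℤ) ∈ Ω j ∧ (x : Fin d → ℤ) ∈ Ω' j then W b x else 0) * D x b'
          = W b x * D x b' := by
      intro x
      by_cases hD : D x b' = 0
      · simp [hD]
      · obtain ⟨j, hb'j, hxj⟩ := hDsupp x b' hD
        have hjeq : j = jb := by
          by_contra h
          exact Finset.disjoint_left.mp (hΩdisj j jb h) hb'j hb'
        subst hjeq
        rw [if_pos ⟨j, hjb, hxj⟩]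
    rw [Matrix.mul_apply]
    simp only [Matrix.of_apply, this]
    rw [← Matrix.mul_apply, hWD]
  · have hne : b ≠ b' := by
      intro h; exact hb' (h ▸ hjb)
    have h1 : (1 : Matrix B B ℂ) b b' = 0 := Matrix.one_apply_ne hne
    rw [Matrix.mul_apply, h1]
    apply Finset.sum_eq_zero
    intro x _
    by_cases hD : D x b' = 0
    · simp [hD]
    · obtain ⟨j, hb'j, hxj⟩ := hDsupp x b' hD
      have hcond : ¬ ∃ j', (b : Fin d → ℤ) ∈ Ω j' ∧ (x : Fin d → ℤ) ∈ Ω' j' := by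
        rintro ⟨j', hbj', hxj'⟩
        have hj'eq : j' = jb := by
          by_contra h
          exact Finset.disjoint_left.mp (hΩdisj j' jb h) hbj' hjb
        subst hj'eq
        have hjne : j ≠ j' := by
          intro h; exact hb' (h ▸ hb'j)
        exact Finset.disjoint_left.mp (hΩ'disj j j' hjne) hxj hxj'
      simp [hcond]
end

section
/- Let B, C, D be finite subsets of ℤ^d, s₀ > d/2, and let 𝓜₁ ∈ 𝐌^C_D, 𝓜₂ ∈ 𝐌^B_C be complex matrices. Then ‖𝓜₁𝓜₂‖_{s₀} ≤ ‖𝓜₁‖_{s₀}‖𝓜₂‖_{s₀}, where ‖𝓜‖_s² = C₀(s₀) Σ_{k} (sup_{k₁-k₂=k}|𝓜(k₁,k₂)|)² ⟨k⟩^{2s} and C₀(s₀) is the algebra constant of the weighted ℓ² space of exponent s₀. In particular, for square matrices 𝓜 ∈ 𝐌^B_B and n ≥ 1, ‖𝓜^n‖_{s₀} ≤ ‖𝓜‖_{s₀}^n. -/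
open scoped Pointwise BigOperators

/-- Weighted `ℓ²` Sobolev norm of a sequence on `ℤ^d`. -/
noncomputable def seqNorm (d : ℕ) (C₀ s : ℝ) (u : (Fin d → ℤ) → ℂ) : ℝ :=
  Real.sqrt (C₀ * ∑' k : Fin d → ℤ, ‖u k‖ ^ 2 * (max 1 ‖k‖) ^ (2 * s))

/-- Discrete convolution on `ℤ^d`. -/
noncomputable def seqConv (d : ℕ) (u₁ u₂ : (Fin d → ℤ) → ℂ) : (Fin d → ℤ) → ℂ :=
  fun k => ∑' k' : Fin d → ℤ, u₁ (k - k') * u₂ k'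

/-- The Sobolev norm of a matrix indexed by finite subsets of `ℤ^d`. -/
noncomputable def sobNorm (d : ℕ) (C₀ s : ℝ) {X₁ X₂ : Finset (Fin d → ℤ)}
    (M : Matrix X₁ X₂ ℂ) : ℝ :=
  Real.sqrt (C₀ * ∑ k ∈ X₁ - X₂,
    (sSup {x : ℝ | ∃ k₁ : X₁, ∃ k₂ : X₂, (k₁ : Fin d → ℤ) - (k₂ : Fin d → ℤ) = k ∧
        x = ‖M k₁ k₂‖}) ^ 2 * (max 1 ‖k‖) ^ (2 * s))

/-!
The entries of `M₁ M₂` on the diagonal `k₁ - k₂ = k` are bounded by the convolution, evaluated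
at `k`, of the sequences of maximal entries of `M₁` and `M₂` along their diagonals. Since the
sequence norm is monotone in the moduli of the entries, the algebra property of the weighted `ℓ²`
norm gives `‖M₁ M₂‖ ≤ ‖M₁‖ ‖M₂‖`; the bound on powers follows by induction.
-/

variable {d : ℕ}

section Sequences

theorem seqNorm_mono {C₀ s : ℝ} {u v : (Fin d → ℤ) → ℂ} (huv : ∀ k, ‖u k‖ ≤ ‖v k‖)
    (hv : (Function.support v).Finite) :
    seqNorm d C₀ s u ≤ seqNorm d C₀ s v := by
  have weight_nonneg : ∀ k : Fin d → ℤ, 0 ≤ (max 1 ‖k‖) ^ (2 * s) := fun k =>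
    Real.rpow_nonneg (zero_le_one.trans (le_max_left _ _)) _
  have hle : ∀ k, ‖u k‖ ^ 2 * (max 1 ‖k‖) ^ (2 * s) ≤ ‖v k‖ ^ 2 * (max 1 ‖k‖) ^ (2 * s) :=
    fun k => mul_le_mul_of_nonneg_right (pow_le_pow_left₀ (norm_nonneg _) (huv k) 2)
      (weight_nonneg k)
  have hv_summable : Summable fun k => ‖v k‖ ^ 2 * (max 1 ‖k‖) ^ (2 * s) :=
    summable_of_ne_finset_zero (s := hv.toFinset) fun k hk => by
      simp [Function.notMem_support.1 (mt hv.mem_toFinset.2 hk)]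
  have hu_summable := hv_summable.of_nonneg_of_le
    (fun k => mul_nonneg (sq_nonneg _) (weight_nonneg k)) hle
  have hsum := hu_summable.tsum_le_tsum hle hv_summable
  rcases le_or_gt 0 C₀ with hC₀ | hC₀
  · exact Real.sqrt_le_sqrt (mul_le_mul_of_nonneg_left hsum hC₀)
  · -- for `C₀ < 0` the left-hand side is the square root of a nonpositive number
    rw [seqNorm, Real.sqrt_eq_zero'.2 (mul_nonpos_of_nonpos_of_nonneg hC₀.le
      (tsum_nonneg fun k => mul_nonneg (sq_nonneg _) (weight_nonneg k)))]
    exact Real.sqrt_nonneg _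

theorem support_seqConv_subset (u₁ u₂ : (Fin d → ℤ) → ℂ) :
    Function.support (seqConv d u₁ u₂) ⊆ Function.support u₁ + Function.support u₂ := by
  intro k hk
  by_contra hk'
  refine hk ((tsum_congr fun k' => ?_).trans tsum_zero)
  by_contra hne
  obtain ⟨h₁, h₂⟩ := mul_ne_zero_iff.1 hne
  exact hk' ⟨k - k', h₁, k', h₂, sub_add_cancel k k'⟩

theorem seqConv_eq_sum {u₁ u₂ : (Fin d → ℤ) → ℂ} {S : Finset (Fin d → ℤ)}
    (hS : Function.support u₂ ⊆ S) (k : Fin d → ℤ) :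
    seqConv d u₁ u₂ k = ∑ k' ∈ S, u₁ (k - k') * u₂ k' :=
  tsum_eq_sum fun k' hk' => by
    rw [Function.notMem_support.1 fun h => hk' (hS h), mul_zero]

end Sequences

section DiagMax

variable {X₁ X₂ X₃ : Finset (Fin d → ℤ)}

noncomputable def diagMax (M : Matrix X₁ X₂ ℂ) (k : Fin d → ℤ) : ℝ :=
  sSup {x : ℝ | ∃ k₁ : X₁, ∃ k₂ : X₂, (k₁ : Fin d → ℤ) - (k₂ : Fin d → ℤ) = k ∧
    x = ‖M k₁ k₂‖}

theorem norm_le_diagMax (M : Matrix X₁ X₂ ℂ) (k₁ : X₁) (k₂ : X₂) :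
    ‖M k₁ k₂‖ ≤ diagMax M ((k₁ : Fin d → ℤ) - k₂) := by
  refine le_csSup (Set.Finite.bddAbove ?_) ⟨k₁, k₂, rfl, rfl⟩
  refine (Set.finite_range fun p : X₁ × X₂ => ‖M p.1 p.2‖).subset ?_
  rintro x ⟨k₁, k₂, -, rfl⟩
  exact ⟨(k₁, k₂), rfl⟩

theorem diagMax_le {M : Matrix X₁ X₂ ℂ} {k : Fin d → ℤ} {r : ℝ} (hr : 0 ≤ r)
    (h : ∀ (k₁ : X₁) (k₂ : X₂), (k₁ : Fin d → ℤ) - k₂ = k → ‖M k₁ k₂‖ ≤ r) :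
    diagMax M k ≤ r :=
  Real.sSup_le (by rintro x ⟨k₁, k₂, hk, rfl⟩; exact h k₁ k₂ hk) hr

theorem diagMax_nonneg (M : Matrix X₁ X₂ ℂ) (k : Fin d → ℤ) : 0 ≤ diagMax M k :=
  Real.sSup_nonneg (by rintro x ⟨k₁, k₂, -, rfl⟩; exact norm_nonneg _)

theorem diagMax_eq_zero_of_notMem (M : Matrix X₁ X₂ ℂ) {k : Fin d → ℤ} (hk : k ∉ X₁ - X₂) :
    diagMax M k = 0 :=
  le_antisymm (diagMax_le le_rfl fun k₁ k₂ h =>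
    absurd (Finset.mem_sub.2 ⟨_, k₁.2, _, k₂.2, h⟩) hk) (diagMax_nonneg M k)

noncomputable def diagMaxSeq (M : Matrix X₁ X₂ ℂ) (k : Fin d → ℤ) : ℂ :=
  diagMax M k

theorem norm_diagMaxSeq (M : Matrix X₁ X₂ ℂ) (k : Fin d → ℤ) :
    ‖diagMaxSeq M k‖ = diagMax M k :=
  Complex.norm_of_nonneg (diagMax_nonneg M k)

theorem support_diagMaxSeq_subset (M : Matrix X₁ X₂ ℂ) :
    Function.support (diagMaxSeq M) ⊆ ↑(X₁ - X₂) := fun k hk => by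
  by_contra h
  exact hk (by simp [diagMaxSeq, diagMax_eq_zero_of_notMem M h])

theorem seqNorm_diagMaxSeq (C₀ s : ℝ) (M : Matrix X₁ X₂ ℂ) :
    seqNorm d C₀ s (diagMaxSeq M) = sobNorm d C₀ s M := by
  rw [seqNorm, tsum_eq_sum fun k hk => by
    rw [Function.notMem_support.1 fun h => hk (support_diagMaxSeq_subset M h)]; simp]
  simp only [norm_diagMaxSeq]
  rfl

theorem diagMax_mul_le (M₁ : Matrix X₁ X₂ ℂ) (M₂ : Matrix X₂ X₃ ℂ) (k : Fin d → ℤ) :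
    diagMax (M₁ * M₂) k ≤ ∑ k' ∈ X₂ - X₃, diagMax M₁ (k - k') * diagMax M₂ k' := by
  have term_nonneg : ∀ k', 0 ≤ diagMax M₁ (k - k') * diagMax M₂ k' := fun k' =>
    mul_nonneg (diagMax_nonneg _ _) (diagMax_nonneg _ _)
  refine diagMax_le (Finset.sum_nonneg fun k' _ => term_nonneg k') ?_
  rintro k₁ k₂ rfl
  calc ‖(M₁ * M₂) k₁ k₂‖ ≤ ∑ k₃ : X₂, ‖M₁ k₁ k₃‖ * ‖M₂ k₃ k₂‖ := by
        rw [Matrix.mul_apply]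
        exact (norm_sum_le _ _).trans_eq (by simp only [norm_mul])
    _ ≤ ∑ k₃ : X₂, diagMax M₁ ((k₁ : Fin d → ℤ) - k₃) * diagMax M₂ ((k₃ : Fin d → ℤ) - k₂) :=
        Finset.sum_le_sum fun k₃ _ => mul_le_mul (norm_le_diagMax M₁ k₁ k₃)
          (norm_le_diagMax M₂ k₃ k₂) (norm_nonneg _) (diagMax_nonneg _ _)
    _ = ∑ k' ∈ X₂.image (· - (k₂ : Fin d → ℤ)),
          diagMax M₁ ((k₁ : Fin d → ℤ) - k₂ - k') * diagMax M₂ k' := by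
        rw [Finset.sum_image fun x _ y _ h => sub_left_injective h,
          ← Finset.sum_coe_sort X₂]
        simp only [sub_sub_sub_cancel_right]
    _ ≤ ∑ k' ∈ X₂ - X₃, diagMax M₁ ((k₁ : Fin d → ℤ) - k₂ - k') * diagMax M₂ k' := by
        refine Finset.sum_le_sum_of_subset_of_nonneg ?_ fun k' _ _ => term_nonneg k'
        intro k' hk'
        obtain ⟨k₃, hk₃, rfl⟩ := Finset.mem_image.1 hk'
        exact Finset.sub_mem_sub hk₃ k₂.2

theorem norm_diagMaxSeq_mul_le (M₁ : Matrix X₁ X₂ ℂ) (M₂ : Matrix X₂ X₃ ℂ) (k : Fin d → ℤ) :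
    ‖diagMaxSeq (M₁ * M₂) k‖ ≤ ‖seqConv d (diagMaxSeq M₁) (diagMaxSeq M₂) k‖ := by
  rw [seqConv_eq_sum (support_diagMaxSeq_subset M₂) k, norm_diagMaxSeq]
  refine (diagMax_mul_le M₁ M₂ k).trans_eq ?_
  simp only [diagMaxSeq, ← Complex.ofReal_mul, ← Complex.ofReal_sum]
  exact (Complex.norm_of_nonneg (Finset.sum_nonneg fun k' _ =>
    mul_nonneg (diagMax_nonneg _ _) (diagMax_nonneg _ _))).symm

end DiagMax

section Submultiplicativity

variable {C₀ s : ℝ}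

theorem sobNorm_mul_le
    (halg : ∀ u₁ u₂ : (Fin d → ℤ) → ℂ,
      (Function.support u₁).Finite → (Function.support u₂).Finite →
      seqNorm d C₀ s (seqConv d u₁ u₂) ≤ seqNorm d C₀ s u₁ * seqNorm d C₀ s u₂)
    {X₁ X₂ X₃ : Finset (Fin d → ℤ)} (M₁ : Matrix X₁ X₂ ℂ) (M₂ : Matrix X₂ X₃ ℂ) :
    sobNorm d C₀ s (M₁ * M₂) ≤ sobNorm d C₀ s M₁ * sobNorm d C₀ s M₂ := by
  have hfin₁ := (X₁ - X₂).finite_toSet.subset (support_diagMaxSeq_subset M₁)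
  have hfin₂ := (X₂ - X₃).finite_toSet.subset (support_diagMaxSeq_subset M₂)
  calc sobNorm d C₀ s (M₁ * M₂) = seqNorm d C₀ s (diagMaxSeq (M₁ * M₂)) :=
        (seqNorm_diagMaxSeq C₀ s _).symm
    _ ≤ seqNorm d C₀ s (seqConv d (diagMaxSeq M₁) (diagMaxSeq M₂)) :=
        seqNorm_mono (norm_diagMaxSeq_mul_le M₁ M₂)
          ((hfin₁.add hfin₂).subset (support_seqConv_subset _ _))
    _ ≤ seqNorm d C₀ s (diagMaxSeq M₁) * seqNorm d C₀ s (diagMaxSeq M₂) :=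
        halg _ _ hfin₁ hfin₂
    _ = sobNorm d C₀ s M₁ * sobNorm d C₀ s M₂ := by
        rw [seqNorm_diagMaxSeq, seqNorm_diagMaxSeq]

theorem sobNorm_pow_le {X : Finset (Fin d → ℤ)}
    (hmul : ∀ M₁ M₂ : Matrix X X ℂ,
      sobNorm d C₀ s (M₁ * M₂) ≤ sobNorm d C₀ s M₁ * sobNorm d C₀ s M₂)
    (M : Matrix X X ℂ) {n : ℕ} (hn : 1 ≤ n) :
    sobNorm d C₀ s (M ^ n) ≤ sobNorm d C₀ s M ^ n := by
  induction n, hn using Nat.le_induction with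
  | base => rw [pow_one, pow_one]
  | succ n _ ih =>
    calc sobNorm d C₀ s (M ^ (n + 1)) ≤ sobNorm d C₀ s (M ^ n) * sobNorm d C₀ s M := by
          rw [pow_succ]; exact hmul _ _
      _ ≤ sobNorm d C₀ s M ^ n * sobNorm d C₀ s M :=
          mul_le_mul_of_nonneg_right ih (Real.sqrt_nonneg _)
      _ = sobNorm d C₀ s M ^ (n + 1) := (pow_succ _ _).symm

end Submultiplicativity

theorem stmt_18_general (d : ℕ) (s₀ : ℝ) (C₀ : ℝ)
    (halg : ∀ u₁ u₂ : (Fin d → ℤ) → ℂ,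
      (Function.support u₁).Finite → (Function.support u₂).Finite →
      seqNorm d C₀ s₀ (seqConv d u₁ u₂) ≤ seqNorm d C₀ s₀ u₁ * seqNorm d C₀ s₀ u₂) :
    (∀ (B C D : Finset (Fin d → ℤ)) (M₁ : Matrix B C ℂ) (M₂ : Matrix C D ℂ),
      sobNorm d C₀ s₀ (M₁ * M₂) ≤ sobNorm d C₀ s₀ M₁ * sobNorm d C₀ s₀ M₂) ∧
    (∀ (B : Finset (Fin d → ℤ)) (M : Matrix B B ℂ) (n : ℕ), 1 ≤ n →
      sobNorm d C₀ s₀ (M ^ n) ≤ sobNorm d C₀ s₀ M ^ n) :=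
  ⟨fun _ _ _ => sobNorm_mul_le halg,
    fun _ M _ hn => sobNorm_pow_le (sobNorm_mul_le halg) M hn⟩

/-- Submultiplicativity of the matrix Sobolev norm at the algebra exponent `s₀ > d/2`:
`‖M₁ M₂‖_{s₀} ≤ ‖M₁‖_{s₀} ‖M₂‖_{s₀}`, and `‖M^n‖_{s₀} ≤ ‖M‖_{s₀}^n` for square matrices,
where `C₀` is the algebra constant of the weighted `ℓ²` space of exponent `s₀`. -/
theorem stmt_18 (d : ℕ) (hd : 1 ≤ d) (s₀ : ℝ) (hs₀ : (d : ℝ) / 2 < s₀) (C₀ : ℝ) (hC₀ : 0 < C₀)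
    (halg : ∀ u₁ u₂ : (Fin d → ℤ) → ℂ,
      (Function.support u₁).Finite → (Function.support u₂).Finite →
      seqNorm d C₀ s₀ (seqConv d u₁ u₂) ≤ seqNorm d C₀ s₀ u₁ * seqNorm d C₀ s₀ u₂) :
    (∀ (B C D : Finset (Fin d → ℤ)) (M₁ : Matrix B C ℂ) (M₂ : Matrix C D ℂ),
      sobNorm d C₀ s₀ (M₁ * M₂) ≤ sobNorm d C₀ s₀ M₁ * sobNorm d C₀ s₀ M₂) ∧
    (∀ (B : Finset (Fin d → ℤ)) (M : Matrix B B ℂ) (n : ℕ), 1 ≤ n →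
      sobNorm d C₀ s₀ (M ^ n) ≤ sobNorm d C₀ s₀ M ^ n) :=
  stmt_18_general d s₀ C₀ halg
end
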